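/- arXiv:2410.14984 — 4 statements merged into one kernel-verified Lean document; each statement's English description precedes it below -/
import Mathlib

section
/- Let Z_1 and Z_2 be independent real random variables with two-sided Pareto tails: there exist constants c_1, c_2 > 0, c_1', c_2' >= 0 and tail indices alpha_1, alpha_2 > 0 such that x^{alpha_i} * P(Z_i > x) -> c_i and x^{alpha_i} * P(Z_i < -x) -> c_i' as x -> infinity, for i = 1,2. Set alpha = min(alpha_1, alpha_2) and let F denote the cumulative distribution function of Z_1 + Z_2. Then the tail of the sum is regularly varying with index -alpha: for every k > 0, the limit as x -> infinity of (1 - F(k*x)) / (1 - F(x)) equals k^{-alpha}. -/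
/-!
Split `{x < Z₁ + Z₂}` according to which summand is large: for every `δ`,

  `P(Z₁ + Z₂ > x) ≤ P(Z₁ > (1-δ)x) + P(Z₂ > (1-δ)x) + P(Z₁ > δx) P(Z₂ > δx)`,

while `{Z₁ > (1+δ)x, Z₂ ≥ -δx} ∪ {Z₁ ≥ -δx, Z₂ > (1+δ)x} ⊆ {Z₁ + Z₂ > x}` gives a matching lower
bound. Multiplied by `x^α`, `α = min α₁ α₂`, the two bounds tend to `(1 ∓ δ)^(-α) C`, where `C` is
the sum of the Pareto constants of the summands of minimal index; the products of tails vanish in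
the limit. Letting `δ → 0` gives `x^α P(Z₁ + Z₂ > x) → C > 0`, and such a tail is regularly
varying with index `-α`.
-/

open MeasureTheory Filter Topology Set

lemma tendsto_of_forall_eventually_squeeze {ι α β : Type*} [LinearOrder β] [TopologicalSpace β]
    [OrderTopology β] {p : Filter ι} [p.NeBot] {l : Filter α} {g : α → β} {c : β}
    {U W : ι → β} (hU : Tendsto U p (𝓝 c)) (hW : Tendsto W p (𝓝 c))
    (hup : ∀ᶠ i in p, ∃ u : α → β, Tendsto u l (𝓝 (U i)) ∧ g ≤ᶠ[l] u)
    (hlo : ∀ᶠ i in p, ∃ w : α → β, Tendsto w l (𝓝 (W i)) ∧ w ≤ᶠ[l] g) :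
    Tendsto g l (𝓝 c) := by
  refine tendsto_order.2 ⟨fun a ha => ?_, fun b hb => ?_⟩
  · obtain ⟨i, hi, w, hw, hwg⟩ := ((tendsto_order.1 hW).1 a ha |>.and hlo).exists
    filter_upwards [(tendsto_order.1 hw).1 a hi, hwg] with x h₁ h₂ using h₁.trans_le h₂
  · obtain ⟨i, hi, u, hu, hgu⟩ := ((tendsto_order.1 hU).2 b hb |>.and hup).exists
    filter_upwards [(tendsto_order.1 hu).2 b hi, hgu] with x h₁ h₂ using h₂.trans_lt h₁

section RpowAsymptotics

variable {f : ℝ → ℝ}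

lemma tendsto_rpow_mul_of_lt {α β c : ℝ} (hαβ : α < β)
    (h : Tendsto (fun x => x ^ β * f x) atTop (𝓝 c)) :
    Tendsto (fun x => x ^ α * f x) atTop (𝓝 0) := by
  have := (tendsto_rpow_neg_atTop (sub_pos.2 hαβ)).mul h
  rw [zero_mul] at this
  refine this.congr' ?_
  filter_upwards [eventually_gt_atTop 0] with x hx
  rw [← mul_assoc, ← Real.rpow_add hx, neg_sub, sub_add_cancel]

lemma tendsto_zero_of_tendsto_rpow_mul {β c : ℝ} (hβ : 0 < β)
    (h : Tendsto (fun x => x ^ β * f x) atTop (𝓝 c)) : Tendsto f atTop (𝓝 0) := by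
  simpa using tendsto_rpow_mul_of_lt hβ h

lemma tendsto_rpow_mul_comp_const_mul {α a L : ℝ} (ha : 0 < a)
    (h : Tendsto (fun x => x ^ α * f x) atTop (𝓝 L)) :
    Tendsto (fun x => x ^ α * f (a * x)) atTop (𝓝 (a ^ (-α) * L)) := by
  refine (tendsto_const_nhds.mul (h.comp (tendsto_id.const_mul_atTop ha))).congr' ?_
  filter_upwards [eventually_gt_atTop 0] with x hx
  simp only [Function.comp_apply, id]
  rw [Real.mul_rpow ha.le hx.le, ← mul_assoc, ← mul_assoc, ← Real.rpow_add ha, neg_add_cancel,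
    Real.rpow_zero, one_mul]

lemma tendsto_comp_const_mul_div_of_tendsto_rpow_mul {α k C : ℝ} (hk : 0 < k) (hC : C ≠ 0)
    (h : Tendsto (fun x => x ^ α * f x) atTop (𝓝 C)) :
    Tendsto (fun x => f (k * x) / f x) atTop (𝓝 (k ^ (-α))) := by
  have := (tendsto_rpow_mul_comp_const_mul hk h).div h hC
  rw [mul_div_assoc, div_self hC, mul_one] at this
  refine this.congr' ?_
  filter_upwards [eventually_gt_atTop 0] with x hx
  exact mul_div_mul_left _ _ (Real.rpow_pos_of_pos hx α).ne'

end RpowAsymptotics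

namespace ProbabilityTheory.IndepFun

variable {Ω : Type*} [MeasurableSpace Ω] {μ : Measure Ω}

lemma measureReal_inter_preimage_eq_mul {β γ : Type*} [MeasurableSpace β] [MeasurableSpace γ]
    {X : Ω → β} {Y : Ω → γ} (h : IndepFun X Y μ) {s : Set β} {t : Set γ}
    (hs : MeasurableSet s) (ht : MeasurableSet t) :
    μ.real (X ⁻¹' s ∩ Y ⁻¹' t) = μ.real (X ⁻¹' s) * μ.real (Y ⁻¹' t) := by
  simp only [measureReal_def, h.measure_inter_preimage_eq_mul _ _ hs ht, ENNReal.toReal_mul]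

variable {Z₁ Z₂ : Ω → ℝ}

lemma measureReal_lt_add_le [IsFiniteMeasure μ] (h : IndepFun Z₁ Z₂ μ) (x δ : ℝ) :
    μ.real {ω | x < Z₁ ω + Z₂ ω} ≤
      μ.real {ω | (1 - δ) * x < Z₁ ω} + μ.real {ω | (1 - δ) * x < Z₂ ω}
        + μ.real {ω | δ * x < Z₁ ω} * μ.real {ω | δ * x < Z₂ ω} := by
  have hsub : {ω | x < Z₁ ω + Z₂ ω} ⊆ {ω | (1 - δ) * x < Z₁ ω} ∪ {ω | (1 - δ) * x < Z₂ ω}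
      ∪ (Z₁ ⁻¹' Ioi (δ * x) ∩ Z₂ ⁻¹' Ioi (δ * x)) := by
    intro ω hω
    simp only [mem_union, mem_inter_iff, mem_preimage, mem_Ioi, mem_ofPred_eq] at hω ⊢
    by_cases h₁ : (1 - δ) * x < Z₁ ω
    · tauto
    by_cases h₂ : (1 - δ) * x < Z₂ ω
    · tauto
    right; constructor <;> linarith
  calc μ.real {ω | x < Z₁ ω + Z₂ ω}
      ≤ μ.real ({ω | (1 - δ) * x < Z₁ ω} ∪ {ω | (1 - δ) * x < Z₂ ω})
          + μ.real (Z₁ ⁻¹' Ioi (δ * x) ∩ Z₂ ⁻¹' Ioi (δ * x)) :=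
        (measureReal_mono hsub).trans (measureReal_union_le _ _)
    _ ≤ _ := by
        rw [h.measureReal_inter_preimage_eq_mul measurableSet_Ioi measurableSet_Ioi]
        exact add_le_add (measureReal_union_le _ _) le_rfl

lemma le_measureReal_lt_add [IsProbabilityMeasure μ] (hZ₁ : Measurable Z₁)
    (hZ₂ : Measurable Z₂) (h : IndepFun Z₁ Z₂ μ) (x δ : ℝ) :
    μ.real {ω | (1 + δ) * x < Z₁ ω} * (1 - μ.real {ω | Z₂ ω < -(δ * x)})
      + μ.real {ω | (1 + δ) * x < Z₂ ω} * (1 - μ.real {ω | Z₁ ω < -(δ * x)})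
      - μ.real {ω | (1 + δ) * x < Z₁ ω} * μ.real {ω | (1 + δ) * x < Z₂ ω}
      ≤ μ.real {ω | x < Z₁ ω + Z₂ ω} := by
  have hIci : ∀ {Z : Ω → ℝ}, Measurable Z →
      μ.real (Z ⁻¹' Ici (-(δ * x))) = 1 - μ.real {ω | Z ω < -(δ * x)} := fun hZ => by
    rw [← compl_Iio, preimage_compl, probReal_compl_eq_one_sub (hZ measurableSet_Iio)]; rfl
  set A := Z₁ ⁻¹' Ioi ((1 + δ) * x) ∩ Z₂ ⁻¹' Ici (-(δ * x))
  set B := Z₁ ⁻¹' Ici (-(δ * x)) ∩ Z₂ ⁻¹' Ioi ((1 + δ) * x)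
  have hA : μ.real A = μ.real {ω | (1 + δ) * x < Z₁ ω} * (1 - μ.real {ω | Z₂ ω < -(δ * x)}) := by
    rw [h.measureReal_inter_preimage_eq_mul measurableSet_Ioi measurableSet_Ici, hIci hZ₂]; rfl
  have hB : μ.real B = μ.real {ω | (1 + δ) * x < Z₂ ω} * (1 - μ.real {ω | Z₁ ω < -(δ * x)}) := by
    rw [h.measureReal_inter_preimage_eq_mul measurableSet_Ici measurableSet_Ioi, hIci hZ₁,
      mul_comm]; rfl
  have hAB : μ.real (A ∩ B) ≤
      μ.real {ω | (1 + δ) * x < Z₁ ω} * μ.real {ω | (1 + δ) * x < Z₂ ω} := by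
    change _ ≤ μ.real (Z₁ ⁻¹' Ioi _) * μ.real (Z₂ ⁻¹' Ioi _)
    rw [← h.measureReal_inter_preimage_eq_mul measurableSet_Ioi measurableSet_Ioi]
    exact measureReal_mono fun ω ⟨⟨h₁, _⟩, _, h₂⟩ => ⟨h₁, h₂⟩
  have hunion : μ.real (A ∪ B) ≤ μ.real {ω | x < Z₁ ω + Z₂ ω} := by
    refine measureReal_mono fun ω hω => ?_
    rcases hω with ⟨h₁, h₂⟩ | ⟨h₁, h₂⟩
    all_goals simp only [mem_preimage, mem_Ioi, mem_Ici] at h₁ h₂; show x < _; linarith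
  have hincl_excl := measureReal_union_add_inter (μ := μ) (s := A) (t := B)
    ((hZ₁ measurableSet_Ici).inter (hZ₂ measurableSet_Ioi))
  linarith

end ProbabilityTheory.IndepFun

section TailOfSum

open ProbabilityTheory

variable {Ω : Type*} [MeasurableSpace Ω] {μ : Measure Ω} [IsProbabilityMeasure μ]
  {Z₁ Z₂ : Ω → ℝ}

theorem tendsto_rpow_mul_measureReal_lt_add (hZ₁ : Measurable Z₁) (hZ₂ : Measurable Z₂)
    (h : IndepFun Z₁ Z₂ μ) {α L₁ L₂ : ℝ}
    (h₁ : Tendsto (fun x => x ^ α * μ.real {ω | x < Z₁ ω}) atTop (𝓝 L₁))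
    (h₂ : Tendsto (fun x => x ^ α * μ.real {ω | x < Z₂ ω}) atTop (𝓝 L₂))
    (hp₂ : Tendsto (fun x => μ.real {ω | x < Z₂ ω}) atTop (𝓝 0))
    (hq₁ : Tendsto (fun x => μ.real {ω | Z₁ ω < -x}) atTop (𝓝 0))
    (hq₂ : Tendsto (fun x => μ.real {ω | Z₂ ω < -x}) atTop (𝓝 0)) :
    Tendsto (fun x => x ^ α * μ.real {ω | x < Z₁ ω + Z₂ ω}) atTop (𝓝 (L₁ + L₂)) := by
  refine tendsto_of_forall_eventually_squeeze (p := 𝓝[>] 0)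
    (U := fun δ => (1 - δ) ^ (-α) * (L₁ + L₂)) (W := fun δ => (1 + δ) ^ (-α) * (L₁ + L₂))
    ?_ ?_ ?_ ?_
  · have : ContinuousAt (fun δ : ℝ => (1 - δ) ^ (-α) * (L₁ + L₂)) 0 := by
      fun_prop (disch := norm_num)
    simpa using this.tendsto.mono_left nhdsWithin_le_nhds
  · have : ContinuousAt (fun δ : ℝ => (1 + δ) ^ (-α) * (L₁ + L₂)) 0 := by
      fun_prop (disch := norm_num)
    simpa using this.tendsto.mono_left nhdsWithin_le_nhds
  · filter_upwards [Ioo_mem_nhdsGT one_pos] with δ ⟨hδ₀, hδ₁⟩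
    have hlim := ((tendsto_rpow_mul_comp_const_mul (sub_pos.2 hδ₁) h₁).add
      (tendsto_rpow_mul_comp_const_mul (sub_pos.2 hδ₁) h₂)).add
      ((tendsto_rpow_mul_comp_const_mul hδ₀ h₁).mul (hp₂.comp (tendsto_id.const_mul_atTop hδ₀)))
    refine ⟨_, by convert hlim using 2; ring, ?_⟩
    filter_upwards [eventually_gt_atTop 0] with x hx
    exact (mul_le_mul_of_nonneg_left (h.measureReal_lt_add_le x δ)
      (Real.rpow_nonneg hx.le α)).trans_eq (by simp only [Function.comp_apply, id]; ring)
  · filter_upwards [self_mem_nhdsWithin] with δ (hδ : 0 < δ)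
    have hδ' : 0 < 1 + δ := by linarith
    have hlim := (((tendsto_rpow_mul_comp_const_mul hδ' h₁).mul
        ((tendsto_const_nhds (x := (1 : ℝ))).sub (hq₂.comp (tendsto_id.const_mul_atTop hδ)))).add
      ((tendsto_rpow_mul_comp_const_mul hδ' h₂).mul
        ((tendsto_const_nhds (x := (1 : ℝ))).sub (hq₁.comp (tendsto_id.const_mul_atTop hδ))))).sub
      ((tendsto_rpow_mul_comp_const_mul hδ' h₁).mul (hp₂.comp (tendsto_id.const_mul_atTop hδ')))
    refine ⟨_, by convert hlim using 2; ring, ?_⟩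
    filter_upwards [eventually_gt_atTop 0] with x hx
    refine (le_of_eq ?_).trans (mul_le_mul_of_nonneg_left
      (h.le_measureReal_lt_add hZ₁ hZ₂ x δ) (Real.rpow_nonneg hx.le α))
    simp only [Function.comp_apply, id]; ring

theorem exists_pos_tendsto_rpow_min_mul_measureReal_lt_add (hZ₁ : Measurable Z₁)
    (hZ₂ : Measurable Z₂) (h : IndepFun Z₁ Z₂ μ) {α₁ α₂ c₁ c₂ c₁' c₂' : ℝ} (hα₁ : 0 < α₁)
    (hα₂ : 0 < α₂) (hc₁ : 0 < c₁) (hc₂ : 0 < c₂)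
    (htail₁ : Tendsto (fun x => x ^ α₁ * μ.real {ω | x < Z₁ ω}) atTop (𝓝 c₁))
    (htail₁' : Tendsto (fun x => x ^ α₁ * μ.real {ω | Z₁ ω < -x}) atTop (𝓝 c₁'))
    (htail₂ : Tendsto (fun x => x ^ α₂ * μ.real {ω | x < Z₂ ω}) atTop (𝓝 c₂))
    (htail₂' : Tendsto (fun x => x ^ α₂ * μ.real {ω | Z₂ ω < -x}) atTop (𝓝 c₂')) :
    ∃ C, 0 < C ∧
      Tendsto (fun x => x ^ min α₁ α₂ * μ.real {ω | x < Z₁ ω + Z₂ ω}) atTop (𝓝 C) := by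
  have hp₂ := tendsto_zero_of_tendsto_rpow_mul hα₂ htail₂
  have hq₁ := tendsto_zero_of_tendsto_rpow_mul hα₁ htail₁'
  have hq₂ := tendsto_zero_of_tendsto_rpow_mul hα₂ htail₂'
  rcases lt_trichotomy α₁ α₂ with h₁₂ | rfl | h₂₁
  · refine ⟨c₁ + 0, by linarith, ?_⟩
    rw [min_eq_left h₁₂.le]
    exact tendsto_rpow_mul_measureReal_lt_add hZ₁ hZ₂ h htail₁
      (tendsto_rpow_mul_of_lt h₁₂ htail₂) hp₂ hq₁ hq₂
  · refine ⟨c₁ + c₂, by linarith, ?_⟩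
    rw [min_self]
    exact tendsto_rpow_mul_measureReal_lt_add hZ₁ hZ₂ h htail₁ htail₂ hp₂ hq₁ hq₂
  · refine ⟨0 + c₂, by linarith, ?_⟩
    rw [min_eq_right h₂₁.le]
    exact tendsto_rpow_mul_measureReal_lt_add hZ₁ hZ₂ h (tendsto_rpow_mul_of_lt h₂₁ htail₁)
      htail₂ hp₂ hq₁ hq₂

end TailOfSum

theorem tail_sum_pareto_regularly_varying_general
    {Ω : Type*} [MeasurableSpace Ω] (ℙ : Measure Ω) [IsProbabilityMeasure ℙ]
    (Z₁ Z₂ : Ω → ℝ) (hZ₁ : Measurable Z₁) (hZ₂ : Measurable Z₂)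
    (hindep : ProbabilityTheory.IndepFun Z₁ Z₂ ℙ)
    (α₁ α₂ c₁ c₂ c₁' c₂' : ℝ) (hα₁ : 0 < α₁) (hα₂ : 0 < α₂)
    (hc₁ : 0 < c₁) (hc₂ : 0 < c₂)
    (htail₁ : Tendsto (fun x : ℝ => x ^ α₁ * (ℙ {ω | x < Z₁ ω}).toReal) atTop (nhds c₁))
    (htail₁' : Tendsto (fun x : ℝ => x ^ α₁ * (ℙ {ω | Z₁ ω < -x}).toReal) atTop (nhds c₁'))
    (htail₂ : Tendsto (fun x : ℝ => x ^ α₂ * (ℙ {ω | x < Z₂ ω}).toReal) atTop (nhds c₂))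
    (htail₂' : Tendsto (fun x : ℝ => x ^ α₂ * (ℙ {ω | Z₂ ω < -x}).toReal) atTop (nhds c₂'))
    (F : ℝ → ℝ) (hF : ∀ x, F x = (ℙ {ω | Z₁ ω + Z₂ ω ≤ x}).toReal) :
    ∀ k : ℝ, 0 < k →
      Tendsto (fun x : ℝ => (1 - F (k * x)) / (1 - F x)) atTop
        (nhds (k ^ (-(min α₁ α₂)))) := by
  intro k hk
  have hsurvival : ∀ x, 1 - F x = ℙ.real {ω | x < Z₁ ω + Z₂ ω} := fun x => by
    have hmeas : MeasurableSet {ω | Z₁ ω + Z₂ ω ≤ x} :=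
      measurableSet_le (hZ₁.add hZ₂) measurable_const
    rw [hF, ← measureReal_def, ← probReal_compl_eq_one_sub hmeas, compl_ofPred]
    simp only [not_le]
  obtain ⟨C, hC, hlim⟩ := exists_pos_tendsto_rpow_min_mul_measureReal_lt_add hZ₁ hZ₂ hindep
    hα₁ hα₂ hc₁ hc₂ htail₁ htail₁' htail₂ htail₂'
  simpa only [hsurvival] using tendsto_comp_const_mul_div_of_tendsto_rpow_mul hk hC.ne' hlim

/-- **Tucker's lemma on convolutions of Pareto-tailed distributions.** If `Z₁` and `Z₂` are
independent real random variables with two-sided Pareto tails of indices `α₁` and `α₂`, then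
the right tail of `Z₁ + Z₂` is regularly varying with index `-min α₁ α₂`. -/
theorem tail_sum_pareto_regularly_varying
    {Ω : Type*} [MeasurableSpace Ω] (ℙ : Measure Ω) [IsProbabilityMeasure ℙ]
    (Z₁ Z₂ : Ω → ℝ) (hZ₁ : Measurable Z₁) (hZ₂ : Measurable Z₂)
    (hindep : ProbabilityTheory.IndepFun Z₁ Z₂ ℙ)
    (α₁ α₂ c₁ c₂ c₁' c₂' : ℝ) (hα₁ : 0 < α₁) (hα₂ : 0 < α₂)
    (hc₁ : 0 < c₁) (hc₂ : 0 < c₂) (hc₁' : 0 ≤ c₁') (hc₂' : 0 ≤ c₂')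
    (htail₁ : Tendsto (fun x : ℝ => x ^ α₁ * (ℙ {ω | x < Z₁ ω}).toReal) atTop (nhds c₁))
    (htail₁' : Tendsto (fun x : ℝ => x ^ α₁ * (ℙ {ω | Z₁ ω < -x}).toReal) atTop (nhds c₁'))
    (htail₂ : Tendsto (fun x : ℝ => x ^ α₂ * (ℙ {ω | x < Z₂ ω}).toReal) atTop (nhds c₂))
    (htail₂' : Tendsto (fun x : ℝ => x ^ α₂ * (ℙ {ω | Z₂ ω < -x}).toReal) atTop (nhds c₂'))
    (F : ℝ → ℝ) (hF : ∀ x, F x = (ℙ {ω | Z₁ ω + Z₂ ω ≤ x}).toReal) :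
    ∀ k : ℝ, 0 < k →
      Tendsto (fun x : ℝ => (1 - F (k * x)) / (1 - F x)) atTop
        (nhds (k ^ (-(min α₁ α₂)))) :=
  tail_sum_pareto_regularly_varying_general ℙ Z₁ Z₂ hZ₁ hZ₂ hindep α₁ α₂ c₁ c₂ c₁' c₂' hα₁ hα₂ hc₁
    hc₂ htail₁ htail₁' htail₂ htail₂' F hF
end

section
/- Let X be an integrable real random variable whose cumulative distribution function F is continuous. Fix a prudence level q in (0,1) and let x_q = inf{ x : F(x) > q } (so that F(x_q) = q by continuity), and let F^{-1}(gamma) = inf{ x : F(x) >= gamma } denote the generalized inverse (quantile function). Then the Tail Conditional Expectation equals the Expected Shortfall: E[ X * 1{X > x_q} ] / (1 - q) = (1/(1-q)) * integral from q to 1 of F^{-1}(gamma) dgamma; equivalently, E[X | X > x_q] = (1/(1-q)) * integral from q to 1 of VaR_gamma[X] dgamma, where VaR_gamma[X] = F^{-1}(gamma). -/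
/-!
For `γ ∈ (0, 1)` the quantile function `F⁻¹ γ = inf {x | γ ≤ F x}` satisfies
`F⁻¹ γ ≤ t ↔ γ ≤ F t`, by right continuity of the cdf `F`. Hence `F⁻¹` pushes the uniform
distribution on `(0, 1)` forward to the law `μ` of `X`, and `F⁻¹ γ > t` exactly when `γ > F t`,
so `∫_{x > t} x dμ = ∫_{F t}^1 F⁻¹`. When `F` is continuous, `F x_q = q`, because
`{x | q < F x}` is then open and `{x | q ≤ F x}` closed.
-/

open MeasureTheory Set Filter Topology

theorem Continuous.apply_csInf_setOf_lt_eq {α β : Type*} [ConditionallyCompleteLinearOrder α]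
    [TopologicalSpace α] [OrderTopology α] [DenselyOrdered α] [NoMinOrder α] [LinearOrder β]
    [TopologicalSpace β] [OrderClosedTopology β] {F : α → β} (hF : Continuous F) {q : β}
    (hne : {x | q < F x}.Nonempty) (hbdd : BddBelow {x | q < F x}) :
    F (sInf {x | q < F x}) = q := by
  refine le_antisymm (not_lt.1 fun hlt => ?_) ?_
  · obtain ⟨l, hl, hIoc⟩ := exists_Ioc_subset_of_mem_nhds
      ((isOpen_lt continuous_const hF).mem_nhds hlt) (exists_lt _)
    obtain ⟨x, hlx, hx⟩ := exists_between hl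
    exact (csInf_le hbdd (hIoc ⟨hlx, hx.le⟩)).not_gt hx
  · exact closure_minimal (fun x hx => le_of_lt hx) (isClosed_le continuous_const hF)
      (csInf_mem_closure hne hbdd)

namespace ProbabilityTheory

/-- Only meaningful for `γ ∈ (0, 1)`: otherwise the set is unbounded below or empty and `sInf`
returns the junk value `0`. -/
noncomputable def quantile (μ : Measure ℝ) (γ : ℝ) : ℝ := sInf {x | γ ≤ cdf μ x}

variable {μ : Measure ℝ} {γ : ℝ}

lemma bddBelow_setOf_le_cdf (hγ : 0 < γ) : BddBelow {x | γ ≤ cdf μ x} := by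
  obtain ⟨l, hl⟩ := ((tendsto_cdf_atBot μ).eventually (eventually_lt_nhds hγ)).exists
  exact ⟨l, fun x hx => le_of_not_gt fun hxl => (hx.trans (monotone_cdf μ hxl.le)).not_gt hl⟩

lemma nonempty_setOf_lt_cdf (hγ : γ < 1) : {x | γ < cdf μ x}.Nonempty :=
  ((tendsto_cdf_atTop μ).eventually (eventually_gt_nhds hγ)).exists

lemma le_cdf_quantile (h1 : γ < 1) : γ ≤ cdf μ (quantile μ γ) := by
  have hright : Tendsto (cdf μ) (𝓝[>] (quantile μ γ)) (𝓝 (cdf μ (quantile μ γ))) :=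
    ((cdf μ).right_continuous _).mono Ioi_subset_Ici_self
  refine ge_of_tendsto hright (eventually_nhdsWithin_of_forall fun t ht => ?_)
  have hne : {x | γ ≤ cdf μ x}.Nonempty :=
    (nonempty_setOf_lt_cdf h1).mono fun x (hx : γ < cdf μ x) => hx.le
  obtain ⟨x, hx, hxt⟩ := exists_lt_of_csInf_lt hne ht
  exact hx.trans (monotone_cdf μ hxt.le)

lemma quantile_le_iff (h0 : 0 < γ) (h1 : γ < 1) {t : ℝ} :
    quantile μ γ ≤ t ↔ γ ≤ cdf μ t :=
  ⟨fun h => (le_cdf_quantile h1).trans (monotone_cdf μ h),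
    fun h => csInf_le (bddBelow_setOf_le_cdf h0) h⟩

lemma monotoneOn_quantile : MonotoneOn (quantile μ) (Ioo 0 1) := fun _ ha _ hb hab =>
  (quantile_le_iff ha.1 ha.2).2 (hab.trans (le_cdf_quantile hb.2))

lemma map_quantile_volume_Ioo [IsProbabilityMeasure μ] :
    (volume.restrict (Ioo 0 1)).map (quantile μ) = μ := by
  have hmeas : AEMeasurable (quantile μ) (volume.restrict (Ioo 0 1)) :=
    aemeasurable_restrict_of_monotoneOn measurableSet_Ioo monotoneOn_quantile
  refine Measure.ext_of_Iic _ _ fun t => ?_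
  have hpre : quantile μ ⁻¹' Iic t ∩ Ioo 0 1 = Ioo 0 1 ∩ Iic (cdf μ t) := by
    ext γ
    simp only [mem_inter_iff, mem_preimage, mem_Iic, mem_Ioo]
    constructor
    · rintro ⟨h, h0, h1⟩
      exact ⟨⟨h0, h1⟩, (quantile_le_iff h0 h1).1 h⟩
    · rintro ⟨⟨h0, h1⟩, h⟩
      exact ⟨(quantile_le_iff h0 h1).2 h, h0, h1⟩
  have hvol : volume (Ioo 0 1 ∩ Iic (cdf μ t)) = ENNReal.ofReal (cdf μ t) := by
    refine le_antisymm ?_ ?_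
    · calc volume (Ioo 0 1 ∩ Iic (cdf μ t)) ≤ volume (Ioc 0 (cdf μ t)) :=
            measure_mono fun γ hγ => ⟨hγ.1.1, hγ.2⟩
        _ = ENNReal.ofReal (cdf μ t) := by rw [Real.volume_Ioc, sub_zero]
    · calc ENNReal.ofReal (cdf μ t) = volume (Ioo 0 (cdf μ t)) := by
            rw [Real.volume_Ioo, sub_zero]
        _ ≤ volume (Ioo 0 1 ∩ Iic (cdf μ t)) := measure_mono fun γ hγ =>
            ⟨⟨hγ.1, hγ.2.trans_le (cdf_le_one μ t)⟩, hγ.2.le⟩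
  rw [Measure.map_apply_of_aemeasurable hmeas measurableSet_Iic,
    Measure.restrict_apply' measurableSet_Ioo, hpre, hvol, ofReal_cdf]

lemma preimage_quantile_Ioi_inter_Ioo (t : ℝ) :
    quantile μ ⁻¹' Ioi t ∩ Ioo 0 1 = Ioo (cdf μ t) 1 := by
  ext γ
  simp only [mem_inter_iff, mem_preimage, mem_Ioi, mem_Ioo]
  constructor
  · rintro ⟨h, h0, h1⟩
    exact ⟨lt_of_not_ge fun ht => h.not_ge ((quantile_le_iff h0 h1).2 ht), h1⟩
  · rintro ⟨ht, h1⟩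
    have h0 : 0 < γ := (cdf_nonneg μ t).trans_lt ht
    exact ⟨lt_of_not_ge fun h => ht.not_ge ((quantile_le_iff h0 h1).1 h), h0, h1⟩

lemma setIntegral_Ioi_eq_setIntegral_quantile [IsProbabilityMeasure μ] {E : Type*}
    [NormedAddCommGroup E] [NormedSpace ℝ E] {f : ℝ → E} (hf : AEStronglyMeasurable f μ) (t : ℝ) :
    ∫ x in Ioi t, f x ∂μ = ∫ γ in Ioo (cdf μ t) 1, f (quantile μ γ) := by
  rw [← map_quantile_volume_Ioo (μ := μ)] at hf
  calc ∫ x in Ioi t, f x ∂μ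
      = ∫ x in Ioi t, f x ∂(volume.restrict (Ioo 0 1)).map (quantile μ) := by
        rw [map_quantile_volume_Ioo]
    _ = _ := by
      rw [setIntegral_map measurableSet_Ioi hf
        (aemeasurable_restrict_of_monotoneOn measurableSet_Ioo monotoneOn_quantile),
        Measure.restrict_restrict' measurableSet_Ioo, preimage_quantile_Ioi_inter_Ioo]

end ProbabilityTheory

theorem tce_eq_es_of_continuous_cdf_general
    {Ω : Type*} [MeasurableSpace Ω] (ℙ : Measure Ω) [IsProbabilityMeasure ℙ]
    (X : Ω → ℝ) (hX : Measurable X)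
    (F : ℝ → ℝ) (hF : ∀ x, F x = (ℙ {ω | X ω ≤ x}).toReal)
    (hFcont : Continuous F)
    (q : ℝ) (hq : q ∈ Set.Ioo (0 : ℝ) 1)
    (xq : ℝ) (hxq : xq = sInf {x : ℝ | q < F x})
    (Finv : ℝ → ℝ) (hFinv : ∀ γ : ℝ, Finv γ = sInf {x : ℝ | γ ≤ F x}) :
    (∫ ω in {ω | xq < X ω}, X ω ∂ℙ) / (1 - q) =
      (1 / (1 - q)) * ∫ γ in q..1, Finv γ := by
  set μ : Measure ℝ := ℙ.map X
  have : IsProbabilityMeasure μ := Measure.isProbabilityMeasure_map hX.aemeasurable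
  have hFμ : F = ProbabilityTheory.cdf μ := funext fun x => by
    rw [hF, ProbabilityTheory.cdf_eq_real, measureReal_def,
      Measure.map_apply hX measurableSet_Iic]
    rfl
  have hFinvμ : Finv = ProbabilityTheory.quantile μ := funext fun γ => by
    rw [hFinv, hFμ, ProbabilityTheory.quantile]
  subst hFμ hFinvμ
  have hbdd : BddBelow {x | q < ProbabilityTheory.cdf μ x} :=
    (ProbabilityTheory.bddBelow_setOf_le_cdf hq.1).mono
      fun x (hx : q < ProbabilityTheory.cdf μ x) => hx.le
  have hFxq : ProbabilityTheory.cdf μ xq = q :=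
    hxq ▸ hFcont.apply_csInf_setOf_lt_eq (ProbabilityTheory.nonempty_setOf_lt_cdf hq.2) hbdd
  have hnum : ∫ ω in {ω | xq < X ω}, X ω ∂ℙ = ∫ x in Ioi xq, x ∂μ :=
    (setIntegral_map measurableSet_Ioi aestronglyMeasurable_id hX.aemeasurable).symm
  rw [hnum, ProbabilityTheory.setIntegral_Ioi_eq_setIntegral_quantile (f := fun x => x)
    aestronglyMeasurable_id, hFxq,
    intervalIntegral.integral_of_le hq.2.le, integral_Ioc_eq_integral_Ioo]
  ring

/-- **TCE equals ES for continuous distributions.** If `X` is integrable with continuous cdf `F`,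
`q ∈ (0,1)`, `x_q = inf{x : F x > q}`, then
`E[X 1{X > x_q}]/(1-q) = (1/(1-q)) ∫_q^1 F⁻¹(γ) dγ`, where `F⁻¹` is the quantile function. -/
theorem tce_eq_es_of_continuous_cdf
    {Ω : Type*} [MeasurableSpace Ω] (ℙ : Measure Ω) [IsProbabilityMeasure ℙ]
    (X : Ω → ℝ) (hX : Measurable X) (hXint : Integrable X ℙ)
    (F : ℝ → ℝ) (hF : ∀ x, F x = (ℙ {ω | X ω ≤ x}).toReal)
    (hFcont : Continuous F)
    (q : ℝ) (hq : q ∈ Set.Ioo (0 : ℝ) 1)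
    (xq : ℝ) (hxq : xq = sInf {x : ℝ | q < F x})
    (Finv : ℝ → ℝ) (hFinv : ∀ γ : ℝ, Finv γ = sInf {x : ℝ | γ ≤ F x}) :
    (∫ ω in {ω | xq < X ω}, X ω ∂ℙ) / (1 - q) =
      (1 / (1 - q)) * ∫ γ in q..1, Finv γ :=
  tce_eq_es_of_continuous_cdf_general ℙ X hX F hF hFcont q hq xq hxq Finv hFinv
end

section
/- (Lemma 5.1, Mellin-Barnes form.) Let alpha > 0, b > 0, j > -1, x > 0, and fix c with 0 < c < j + 1. Then the Laplace transform of t |-> t^j * exp(-b * t^alpha) admits the vertical-line (Mellin-Barnes) integral representation: integral from 0 to infinity of exp(-x*t) * t^j * exp(-b*t^alpha) dt = (1 / (2*pi * alpha * b^{(j+1)/alpha})) * integral over y in R of Gamma(c + i*y) * Gamma( (j + 1 - c - i*y)/alpha ) * (x * b^{-1/alpha})^{-(c + i*y)} dy, where z^{w} for z > 0 denotes exp(w * log z). -/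
/-!
Mellin inversion for `Γ` gives `exp (-r) = (2π)⁻¹ ∫ Γ(c + iy) r^{-(c + iy)} dy` for `r, c > 0`.
Inserting this with `r = x t` into the Laplace integral of `g t = t^j exp (-b t^α)` and swapping
the two integrals leaves `(2π)⁻¹ ∫ Γ(s) x^{-s} 𝓜g(1 - s) dy` with `s = c + iy`. Fubini applies
because `Γ` decays quadratically on vertical lines and `t^{-c} g t` is integrable, which is where
`c < j + 1` enters. Finally, the substitution `u = b t^α` turns `𝓜g(1 - s)` into
`b^{-(j + 1 - s)/α} Γ((j + 1 - s)/α) / α`.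
-/

open MeasureTheory Set Complex

namespace Complex

theorem norm_Gamma_le_Gamma_re {s : ℂ} (hs : 0 < s.re) : ‖Gamma s‖ ≤ Real.Gamma s.re := by
  rw [Gamma_eq_integral hs, GammaIntegral, Real.Gamma_eq_integral hs]
  refine (norm_integral_le_integral_norm _).trans_eq
    (setIntegral_congr_fun measurableSet_Ioi fun t ht => ?_)
  rw [norm_mul, norm_real, Real.norm_of_nonneg (Real.exp_pos _).le,
    norm_cpow_eq_rpow_re_of_pos ht, sub_re, one_re]

theorem differentiableAt_Gamma_of_re_pos {s : ℂ} (hs : 0 < s.re) : DifferentiableAt ℂ Gamma s :=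
  differentiableAt_Gamma s fun m hm => by
    rw [hm, neg_re, natCast_re] at hs
    linarith [m.cast_nonneg (α := ℝ)]

theorem continuous_Gamma_vertical {c : ℝ} (hc : 0 < c) :
    Continuous fun y : ℝ => Gamma (c + y * I) :=
  continuous_iff_continuousAt.2 fun _ =>
    (differentiableAt_Gamma_of_re_pos (by simpa using hc)).continuousAt.comp (by fun_prop)

theorem sq_norm_mul_norm_Gamma_le {s : ℂ} (hs : 0 < s.re) :
    ‖s‖ ^ 2 * ‖Gamma s‖ ≤ Real.Gamma (s.re + 2) := by
  have hs₀ : s ≠ 0 := fun h => by simp [h] at hs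
  have hs₁ : s + 1 ≠ 0 := fun h => by
    have := congrArg re h
    simp only [add_re, one_re, zero_re] at this
    linarith
  have hGamma : Gamma (s + 2) = (s + 1) * (s * Gamma s) := by
    rw [show s + 2 = s + 1 + 1 by ring, Gamma_add_one _ hs₁, Gamma_add_one _ hs₀]
  have hnorm : ‖s‖ ≤ ‖s + 1‖ := by
    rw [← sq_le_sq₀ (norm_nonneg _) (norm_nonneg _), Complex.sq_norm, Complex.sq_norm,
      normSq_apply, normSq_apply, add_re, add_im, one_re, one_im]
    nlinarith
  calc ‖s‖ ^ 2 * ‖Gamma s‖ ≤ ‖s + 1‖ * ‖s‖ * ‖Gamma s‖ := by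
        rw [sq]; gcongr
    _ = ‖Gamma (s + 2)‖ := by rw [hGamma, norm_mul, norm_mul, mul_assoc]
    _ ≤ Real.Gamma (s.re + 2) := by
        simpa using norm_Gamma_le_Gamma_re (s := s + 2)
          (by rw [add_re, re_ofNat]; linarith)

theorem verticalIntegrable_Gamma {c : ℝ} (hc : 0 < c) : VerticalIntegrable Gamma c := by
  set m : ℝ := min (c ^ 2) 1
  have hm : 0 < m := lt_min (by positivity) one_pos
  refine (integrable_inv_one_add_sq.const_mul (Real.Gamma (c + 2) / m)).mono'
    (continuous_Gamma_vertical hc).aestronglyMeasurable (.of_forall fun y => ?_)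
  have hdecay := sq_norm_mul_norm_Gamma_le (s := c + y * I) (by simpa using hc)
  simp only [Complex.sq_norm, normSq_add_mul_I, add_re, ofReal_re, re_ofReal_mul, I_re, mul_zero,
    add_zero] at hdecay
  have hm_le : m * (1 + y ^ 2) ≤ c ^ 2 + y ^ 2 := by
    nlinarith [min_le_left (c ^ 2) 1, min_le_right (c ^ 2) 1]
  rw [div_mul_eq_mul_div, le_div_iff₀ hm, ← div_eq_mul_inv, le_div_iff₀ (by positivity)]
  nlinarith [norm_nonneg (Gamma (c + y * I))]

theorem mellin_exp_neg {s : ℂ} (hs : 0 < s.re) :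
    mellin (fun t => (Real.exp (-t) : ℂ)) s = Gamma s := by
  rw [← GammaIntegral_eq_mellin, Gamma_eq_integral hs]

theorem mellinInv_Gamma {c x : ℝ} (hc : 0 < c) (hx : 0 < x) :
    mellinInv c Gamma x = Real.exp (-x) := by
  have hline : ∀ y : ℝ, mellin (fun t => (Real.exp (-t) : ℂ)) (c + y * I) = Gamma (c + y * I) :=
    fun _ => mellin_exp_neg (by simpa using hc)
  have hconv : MellinConvergent (fun t => (Real.exp (-t) : ℂ)) c := by
    simpa [MellinConvergent, mul_comm] using GammaIntegral_convergent (s := c) (by simpa using hc)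
  have hinv := mellinInv_mellin_eq c _ hx hconv
    ((verticalIntegrable_Gamma hc).congr (.of_forall fun y => (hline y).symm)) (by fun_prop)
  simpa only [mellinInv, hline] using hinv

end Complex

section LaplaceMellinBarnes

variable {E : Type*} [NormedAddCommGroup E] [NormedSpace ℂ E]

theorem MellinConvergent.aestronglyMeasurable {f : ℝ → E} {s : ℂ} (hf : MellinConvergent f s) :
    AEStronglyMeasurable f (volume.restrict (Ioi 0)) := by
  have hpow : ContinuousOn (fun t : ℝ => (t : ℂ) ^ (1 - s)) (Ioi 0) :=
    fun t ht => (continuousAt_ofReal_cpow_const _ _ (Or.inr ht.out.ne')).continuousWithinAt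
  refine ((hpow.aestronglyMeasurable measurableSet_Ioi).smul
    (Integrable.aestronglyMeasurable hf)).congr
    (ae_restrict_of_forall_mem measurableSet_Ioi fun t ht => ?_)
  rw [Pi.smul_apply', smul_smul, ← cpow_add _ _ (ofReal_ne_zero.2 ht.out.ne'),
    sub_add_sub_cancel', sub_self, cpow_zero, one_smul]

theorem integrable_uncurry_cpow_mul_Gamma_smul {g : ℝ → E} {c x : ℝ} (hc : 0 < c) (hx : 0 < x)
    (hg : MellinConvergent g (1 - c)) :
    Integrable (Function.uncurry fun (y t : ℝ) =>
        (((x * t : ℝ) : ℂ) ^ (-(c + y * I)) * Gamma (c + y * I)) • g t)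
      ((volume : Measure ℝ).prod (volume.restrict (Ioi 0))) := by
  have hΩ : MeasurableSet ((univ : Set ℝ) ×ˢ Ioi (0 : ℝ)) :=
    MeasurableSet.univ.prod measurableSet_Ioi
  have hμ : (volume : Measure ℝ).prod (volume.restrict (Ioi 0)) =
      (volume.prod volume).restrict ((univ : Set ℝ) ×ˢ Ioi (0 : ℝ)) := by
    rw [← Measure.prod_restrict, Measure.restrict_univ]
  have hbound : Integrable (fun p : ℝ × ℝ =>
      ‖Gamma (c + p.1 * I)‖ * (x ^ (-c) * ‖(p.2 : ℂ) ^ (1 - c - 1 : ℂ) • g p.2‖))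
      ((volume : Measure ℝ).prod (volume.restrict (Ioi 0))) :=
    (verticalIntegrable_Gamma hc).norm.mul_prod (hg.norm.const_mul _)
  have hkernel : ContinuousOn (fun p : ℝ × ℝ =>
      ((x * p.2 : ℝ) : ℂ) ^ (-(c + p.1 * I)) * Gamma (c + p.1 * I)) (univ ×ˢ Ioi 0) := by
    refine continuousOn_of_forall_continuousAt fun p hp => ?_
    refine ContinuousAt.mul ?_
      ((continuous_Gamma_vertical hc).continuousAt.comp continuous_fst.continuousAt)
    exact (by fun_prop : Continuous fun p : ℝ × ℝ => ((x * p.2 : ℝ) : ℂ)).continuousAt.cpow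
      (by fun_prop) (ofReal_mem_slitPlane.2 (mul_pos hx hp.2))
  refine hbound.mono' (.smul (hμ ▸ hkernel.aestronglyMeasurable hΩ)
    hg.aestronglyMeasurable.comp_snd)
    (hμ ▸ ae_restrict_of_forall_mem hΩ fun p hp => le_of_eq ?_)
  have ht : 0 < p.2 := hp.2
  rw [Function.uncurry_def, norm_smul, norm_mul, norm_smul,
    norm_cpow_eq_rpow_re_of_pos (mul_pos hx ht), norm_cpow_eq_rpow_re_of_pos ht,
    Real.mul_rpow hx.le ht.le]
  simp only [neg_re, add_re, ofReal_re, mul_re, I_re, I_im, ofReal_im, sub_re, one_re]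
  ring_nf

theorem integral_exp_neg_mul_smul_eq_mellinInv [CompleteSpace E] {g : ℝ → E} {c x : ℝ}
    (hc : 0 < c) (hx : 0 < x) (hg : MellinConvergent g (1 - c)) :
    ∫ t in Ioi 0, Real.exp (-(x * t)) • g t =
      mellinInv c (fun s => Gamma s • mellin g (1 - s)) x := by
  calc ∫ t in Ioi 0, Real.exp (-(x * t)) • g t
      = ∫ t in Ioi 0, (1 / (2 * Real.pi)) • ∫ y : ℝ,
          (((x * t : ℝ) : ℂ) ^ (-(c + y * I)) * Gamma (c + y * I)) • g t := by
        refine setIntegral_congr_fun measurableSet_Ioi fun t ht => ?_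
        rw [← coe_smul, ← mellinInv_Gamma hc (mul_pos hx ht), mellinInv, integral_smul_const,
          smul_assoc]
        rfl
    _ = (1 / (2 * Real.pi)) • ∫ y : ℝ, ∫ t in Ioi 0,
          (((x * t : ℝ) : ℂ) ^ (-(c + y * I)) * Gamma (c + y * I)) • g t := by
        rw [integral_smul, integral_integral_swap
          (integrable_uncurry_cpow_mul_Gamma_smul hc hx hg)]
    _ = mellinInv c (fun s => Gamma s • mellin g (1 - s)) x := by
        rw [mellinInv]
        congr 1
        refine integral_congr_ae (.of_forall fun y => ?_)
        dsimp only [mellin]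
        rw [← integral_smul, ← integral_smul]
        refine setIntegral_congr_fun measurableSet_Ioi fun t ht => ?_
        rw [smul_smul, smul_smul, ofReal_mul, mul_cpow_ofReal_nonneg hx.le (le_of_lt ht),
          sub_sub_cancel_left]
        ring_nf

end LaplaceMellinBarnes

theorem mellin_exp_neg_mul_rpow {α b : ℝ} (hα : 0 < α) (hb : 0 < b) {s : ℂ} (hs : 0 < s.re) :
    mellin (fun t => (Real.exp (-b * t ^ α) : ℂ)) s =
      (b : ℂ) ^ (-(s / α)) * Gamma (s / α) / α := by
  have hsα : 0 < (s / α).re := by rw [div_ofReal_re]; positivity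
  simp_rw [neg_mul]
  rw [mellin_comp_rpow (fun u => (Real.exp (-(b * u)) : ℂ)), abs_of_pos hα,
    mellin_comp_mul_left (fun u => (Real.exp (-u) : ℂ)) _ hb, mellin_exp_neg hsα, smul_eq_mul,
    real_smul, ofReal_inv]
  ring

theorem mellin_rpow_mul_exp_neg_mul_rpow {α b j : ℝ} (hα : 0 < α) (hb : 0 < b) {s : ℂ}
    (hs : 0 < s.re + j) :
    mellin (fun t => ((t ^ j * Real.exp (-b * t ^ α) : ℝ) : ℂ)) s =
      (b : ℂ) ^ (-((s + j) / α)) * Gamma ((s + j) / α) / α := by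
  rw [← mellin_exp_neg_mul_rpow hα hb (by simpa using hs), ← mellin_cpow_smul]
  refine setIntegral_congr_fun measurableSet_Ioi fun t ht => ?_
  simp only [smul_eq_mul, ofReal_mul, ofReal_cpow (le_of_lt ht)]

theorem mellinConvergent_rpow_mul_exp_neg_mul_rpow {α b j : ℝ} (hα : 0 < α) (hb : 0 < b)
    {s : ℂ} (hs : 0 < s.re + j) :
    MellinConvergent (fun t => ((t ^ j * Real.exp (-b * t ^ α) : ℝ) : ℂ)) s := by
  have hcont : ContinuousOn (fun t => ((t ^ j * Real.exp (-b * t ^ α) : ℝ) : ℂ)) (Ioi 0) := by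
    refine continuousOn_of_forall_continuousAt fun t ht => ?_
    have ht₀ : t ≠ 0 := ht.out.ne'
    fun_prop (disch := exact Or.inl ht₀)
  rw [MellinConvergent, mellin_convergent_iff_norm le_rfl measurableSet_Ioi
    (hcont.aestronglyMeasurable measurableSet_Ioi)]
  refine (integrableOn_rpow_mul_exp_neg_mul_rpow (s := s.re - 1 + j) (by linarith) hα hb).congr_fun
    (fun t ht => ?_) measurableSet_Ioi
  dsimp only
  rw [norm_real, Real.norm_of_nonneg (by have := ht.out; positivity), Real.rpow_add ht]
  ring

theorem ofReal_cpow_neg_mul_ofReal_cpow_neg_sub_div {x b : ℝ} (hx : 0 < x) (hb : 0 < b)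
    (a α : ℝ) (s : ℂ) :
    (x : ℂ) ^ (-s) * (b : ℂ) ^ (-((a - s) / α)) =
      ((b ^ (a / α) : ℝ) : ℂ)⁻¹ * ((x * b ^ (-(1 / α)) : ℝ) : ℂ) ^ (-s) := by
  rw [ofReal_mul, mul_cpow_ofReal_nonneg hx.le (by positivity), ← cpow_mul_ofReal_nonneg hb.le,
    ofReal_cpow hb.le, ← cpow_neg, mul_left_comm, ← cpow_add _ _ (ofReal_ne_zero.2 hb.ne')]
  congr 2
  push_cast
  ring

theorem cpow_neg_smul_Gamma_smul_mellin_rpow_mul_exp_neg_mul_rpow {α b j x : ℝ} (hα : 0 < α)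
    (hb : 0 < b) (hx : 0 < x) {s : ℂ} (hs : s.re < j + 1) :
    (x : ℂ) ^ (-s) • Gamma s • mellin (fun t => ((t ^ j * Real.exp (-b * t ^ α) : ℝ) : ℂ)) (1 - s) =
      ((α * b ^ ((j + 1) / α) : ℝ) : ℂ)⁻¹ *
        (Gamma s * Gamma ((j + 1 - s) / α) * ((x * b ^ (-(1 / α)) : ℝ) : ℂ) ^ (-s)) := by
  have hshift : 1 - s + j = ((j + 1 : ℝ) : ℂ) - s := by push_cast; ring
  rw [mellin_rpow_mul_exp_neg_mul_rpow hα hb (by rw [sub_re, one_re]; linarith), hshift,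
    smul_eq_mul, smul_eq_mul]
  calc _ = Gamma s * Gamma ((((j + 1 : ℝ) : ℂ) - s) / α) / α *
        ((x : ℂ) ^ (-s) * (b : ℂ) ^ (-((((j + 1 : ℝ) : ℂ) - s) / α))) := by ring
    _ = _ := by
        rw [ofReal_cpow_neg_mul_ofReal_cpow_neg_sub_div hx hb]
        push_cast
        ring

theorem laplace_rpow_exp_neg_rpow_mellinBarnes_general
    (α b j x c : ℝ) (hα : 0 < α) (hb : 0 < b) (hx : 0 < x)
    (hc₀ : 0 < c) (hc₁ : c < j + 1) :
    ((∫ t in Set.Ioi (0 : ℝ), Real.exp (-x * t) * t ^ j * Real.exp (-b * t ^ α) : ℝ) : ℂ) =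
      ((1 / (2 * Real.pi * α * b ^ ((j + 1) / α)) : ℝ) : ℂ) *
        ∫ y : ℝ, Complex.Gamma (c + y * Complex.I) *
          Complex.Gamma ((j + 1 - c - y * Complex.I) / α) *
          ((x * b ^ (-(1 / α)) : ℝ) : ℂ) ^ (-(c + y * Complex.I)) := by
  set g : ℝ → ℂ := fun t => ((t ^ j * Real.exp (-b * t ^ α) : ℝ) : ℂ)
  have hg : MellinConvergent g (1 - c) :=
    mellinConvergent_rpow_mul_exp_neg_mul_rpow hα hb
      (by rw [sub_re, one_re, ofReal_re]; linarith)
  have hlaplace : ((∫ t in Ioi 0, Real.exp (-x * t) * t ^ j * Real.exp (-b * t ^ α) : ℝ) : ℂ) =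
      ∫ t in Ioi 0, Real.exp (-(x * t)) • g t := by
    rw [← integral_complex_ofReal]
    simp only [g, real_smul, neg_mul, mul_assoc, ofReal_mul]
  rw [hlaplace, integral_exp_neg_mul_smul_eq_mellinInv hc₀ hx hg, mellinInv]
  simp_rw [g, fun y : ℝ => cpow_neg_smul_Gamma_smul_mellin_rpow_mul_exp_neg_mul_rpow hα hb hx
    (s := c + y * I) (by simpa using hc₁), sub_add_eq_sub_sub]
  rw [integral_const_mul, real_smul]
  push_cast
  ring

/-- **Lemma 5.1 (Mellin–Barnes form).** For `α > 0`, `b > 0`, `j > -1`, `x > 0` and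
`0 < c < j + 1`, the Laplace transform of `t ↦ t^j exp(-b t^α)` has the vertical-line
Mellin–Barnes representation at abscissa `c`. -/
theorem laplace_rpow_exp_neg_rpow_mellinBarnes
    (α b j x c : ℝ) (hα : 0 < α) (hb : 0 < b) (hj : -1 < j) (hx : 0 < x)
    (hc₀ : 0 < c) (hc₁ : c < j + 1) :
    ((∫ t in Set.Ioi (0 : ℝ), Real.exp (-x * t) * t ^ j * Real.exp (-b * t ^ α) : ℝ) : ℂ) =
      ((1 / (2 * Real.pi * α * b ^ ((j + 1) / α)) : ℝ) : ℂ) *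
        ∫ y : ℝ, Complex.Gamma (c + y * Complex.I) *
          Complex.Gamma ((j + 1 - c - y * Complex.I) / α) *
          ((x * b ^ (-(1 / α)) : ℝ) : ℂ) ^ (-(c + y * Complex.I)) :=
  laplace_rpow_exp_neg_rpow_mellinBarnes_general α b j x c hα hb hx hc₀ hc₁
end

section
/- (Theorem 5.3, integral form.) Fix alpha in (1,2) and beta in [-1,1], sigma > 0, and set xi = sigma^alpha * (1 - i*beta*tan(pi*alpha/2)). Define the stable density by Fourier inversion: f(s) = (1/pi) * Re[ integral from 0 to infinity of exp( -i*t*s - t^alpha * xi ) dt ]. Then for every threshold s_q > 0, the partial first moment over the tail satisfies: integral from s_q to infinity of s * f(s) ds = (alpha/pi) * Re[ xi * integral from 0 to infinity of t^{alpha - 2} * exp( -i*s_q*t - t^alpha * xi ) dt ]. Consequently, if S is a random variable with density f and cdf F, and s_q is the q-quantile (F(s_q) = q), then the Tail Conditional Expectation is TCE_q[S] = (alpha / (pi*(1-q))) * Re[ xi * integral from 0 to infinity of t^{alpha - 2} * exp( -i*s_q*t - t^alpha*xi ) dt ]. -/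
/-!
Write `M(s) = ∫₀^∞ e^{-its} e^{-ξ t^α} dt`, so that `f = Re M / π`, and
`J(s) = ∫₀^∞ t^{α-1} e^{-its - ξ t^α} dt`, `K(s) = ∫₀^∞ t^{α-2} e^{-its - ξ t^α} dt`.
One integration by parts gives `s M(s) = -i + i α ξ J(s)`, hence `s f(s) = (α/π) Re(i ξ J(s))`.
Differentiating under the integral sign, `K' = -i J`, and `K(s) → 0` by the Riemann–Lebesgue
lemma, so `∫_{s_q}^∞ J = -i K(s_q)` and the formula follows. The analytic point is that `J` is
integrable at infinity: a second integration by parts, and a split of the resulting integral at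
`t = 1/s`, give `J(s) = O(s^{-α})`.
-/

open MeasureTheory Set Filter Topology Asymptotics Complex

noncomputable def fourierIoi (u : ℝ → ℂ) (s : ℝ) : ℂ := ∫ t in Ioi (0 : ℝ), cexp (-I * t * s) * u t

section HalfLineFourier

variable {u u' : ℝ → ℂ}

lemma norm_cexp_neg_I_mul_mul (t s : ℝ) : ‖cexp (-I * t * s)‖ = 1 := by
  rw [norm_exp]; simp

lemma hasDerivAt_cexp_neg_I_mul_mul (t s : ℝ) :
    HasDerivAt (fun t : ℝ => cexp (-I * t * s)) (cexp (-I * t * s) * (-I * s)) t := by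
  simpa using ((((hasDerivAt_id t).ofReal_comp).const_mul (-I)).mul_const (s : ℂ)).cexp

lemma hasDerivAt_cexp_neg_I_mul_mul_right (t s : ℝ) :
    HasDerivAt (fun s : ℝ => cexp (-I * t * s)) (cexp (-I * t * s) * (-I * t)) s := by
  simpa using (((hasDerivAt_id s).ofReal_comp).const_mul (-I * t)).cexp

lemma MeasureTheory.IntegrableOn.cexp_neg_I_mul_mul {S : Set ℝ} (hu : IntegrableOn u S) (s : ℝ) :
    IntegrableOn (fun t : ℝ => cexp (-I * t * s) * u t) S :=
  hu.bdd_mul (by fun_prop : Continuous fun t : ℝ => cexp (-I * t * s)).aestronglyMeasurable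
    (ae_of_all _ fun t => (norm_cexp_neg_I_mul_mul t s).le)

theorem integral_Ioi_cexp_mul_eq {a s : ℝ} (hs : s ≠ 0)
    (hderiv : ∀ t ∈ Ioi a, HasDerivAt u (u' t) t) (hcont : ContinuousWithinAt u (Ioi a) a)
    (hu0 : Tendsto u atTop (𝓝 0)) (hu : IntegrableOn u (Ioi a)) (hu' : IntegrableOn u' (Ioi a)) :
    ∫ t in Ioi a, cexp (-I * t * s) * u t =
      (cexp (-I * a * s) * u a + ∫ t in Ioi a, cexp (-I * t * s) * u' t) / (I * s) := by
  have hIs : -I * (s : ℂ) ≠ 0 := mul_ne_zero (neg_ne_zero.mpr I_ne_zero) (ofReal_ne_zero.mpr hs)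
  let v : ℝ → ℂ := fun t => cexp (-I * t * s) * (-I * s)⁻¹
  have hv : ∀ t ∈ Ioi a, HasDerivAt v (cexp (-I * t * s)) t := fun t _ =>
    ((hasDerivAt_cexp_neg_I_mul_mul t s).mul_const _).congr_deriv (mul_inv_cancel_right₀ hIs _)
  have hv0 : Tendsto (u * v) atTop (𝓝 0) := by
    rw [tendsto_zero_iff_norm_tendsto_zero]
    have h := hu0.norm.mul_const ‖(-I * (s : ℂ))⁻¹‖
    rw [norm_zero, zero_mul] at h
    refine h.congr fun t => ?_
    rw [Pi.mul_apply, norm_mul, norm_mul, norm_cexp_neg_I_mul_mul, one_mul]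
  have key := integral_Ioi_mul_deriv_eq_deriv_mul hderiv hv
    ((hu.cexp_neg_I_mul_mul s).congr_fun (fun t _ => mul_comm _ _) measurableSet_Ioi)
    (IntegrableOn.congr_fun ((hu'.cexp_neg_I_mul_mul s).mul_const (-I * (s : ℂ))⁻¹)
      (fun t _ => by simp only [Pi.mul_apply, v]; ring) measurableSet_Ioi)
    (hcont.mul (by fun_prop : Continuous v).continuousWithinAt) hv0
  have hint : ∫ t in Ioi a, u' t * v t =
      (∫ t in Ioi a, cexp (-I * t * s) * u' t) * (-I * s)⁻¹ := by
    rw [← integral_mul_const]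
    exact setIntegral_congr_fun measurableSet_Ioi fun t _ => by ring
  rw [setIntegral_congr_fun measurableSet_Ioi fun t _ => mul_comm _ _, key, hint, Pi.mul_apply]
  generalize ∫ t in Ioi a, cexp (-I * t * s) * u' t = F
  simp only [v]
  field_simp
  ring

theorem norm_integral_Ioi_cexp_mul_le {a s : ℝ} (hs : 0 < s)
    (hderiv : ∀ t ∈ Ici a, HasDerivAt u (u' t) t) (hu0 : Tendsto u atTop (𝓝 0))
    (hu : IntegrableOn u (Ioi a)) (hu' : IntegrableOn u' (Ioi a)) :
    ‖∫ t in Ioi a, cexp (-I * t * s) * u t‖ ≤ (‖u a‖ + ∫ t in Ioi a, ‖u' t‖) / s := by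
  rw [integral_Ioi_cexp_mul_eq hs.ne' (fun t ht => hderiv t (Ioi_subset_Ici_self ht))
    (hderiv a (mem_Ici.mpr le_rfl)).continuousAt.continuousWithinAt hu0 hu hu', norm_div]
  have hIs : ‖I * (s : ℂ)‖ = s := by simp [abs_of_pos hs]
  rw [hIs]
  gcongr
  refine (norm_add_le _ _).trans
    (add_le_add (by rw [norm_mul, norm_cexp_neg_I_mul_mul, one_mul]) ?_)
  refine (norm_integral_le_integral_norm _).trans (le_of_eq ?_)
  simp_rw [norm_mul, norm_cexp_neg_I_mul_mul, one_mul]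

lemma norm_setIntegral_Ioc_le_of_norm_le_rpow {f : ℝ → ℂ} {a A ε : ℝ} (ha : a < 1) (hε : 0 ≤ ε)
    (hf : ∀ t ∈ Ioc 0 ε, ‖f t‖ ≤ A * t ^ (-a)) :
    ‖∫ t in Ioc 0 ε, f t‖ ≤ A * ε ^ (1 - a) / (1 - a) := by
  have hint : IntegrableOn (fun t : ℝ => A * t ^ (-a)) (Ioc 0 ε) :=
    ((intervalIntegrable_iff_integrableOn_Ioc_of_le hε).mp
      (intervalIntegral.intervalIntegrable_rpow' (by linarith))).const_mul A
  refine (norm_integral_le_of_norm_le hint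
    ((ae_restrict_mem measurableSet_Ioc).mono hf)).trans (le_of_eq ?_)
  rw [integral_const_mul, ← intervalIntegral.integral_of_le hε,
    integral_rpow (Or.inl (by linarith)), neg_add_eq_sub, Real.zero_rpow (by linarith)]
  ring

lemma norm_integral_Ioi_cexp_mul_le_of_rpow {w : ℝ → ℂ} {a A A' ε s : ℝ} (ha : 0 < a)
    (hε : 0 < ε) (hs : 0 < s) (hderiv : ∀ t ∈ Ioi 0, HasDerivAt u (u' t) t)
    (hu : IntegrableOn u (Ioi 0)) (hub : ∀ t ∈ Ioi 0, ‖u t‖ ≤ A * t ^ (-a))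
    (hu'b : ∀ t ∈ Ioi 0, ‖u' t‖ ≤ A' * t ^ (-a - 1) + ‖w t‖) (hw : IntegrableOn w (Ioi 0)) :
    ‖∫ t in Ioi ε, cexp (-I * t * s) * u t‖ ≤
      (A * ε ^ (-a) + A' * (ε ^ (-a) / a) + ∫ t in Ioi 0, ‖w t‖) / s := by
  have hIoi : Ioi ε ⊆ Ioi 0 := Ioi_subset_Ioi hε.le
  have hpow_int : IntegrableOn (fun t : ℝ => A' * t ^ (-a - 1)) (Ioi ε) :=
    (integrableOn_Ioi_rpow_of_lt (by linarith) hε).const_mul A'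
  have hu'_le : ∀ᵐ t ∂volume.restrict (Ioi ε), ‖u' t‖ ≤ A' * t ^ (-a - 1) + ‖w t‖ :=
    (ae_restrict_mem measurableSet_Ioi).mono fun t ht => hu'b t (hε.trans ht)
  have hu'meas : AEStronglyMeasurable u' (volume.restrict (Ioi 0)) :=
    (measurable_deriv u).aestronglyMeasurable.congr
      ((ae_restrict_mem measurableSet_Ioi).mono fun t ht => (hderiv t ht).deriv)
  have hbound_int : IntegrableOn (fun t => A' * t ^ (-a - 1) + ‖w t‖) (Ioi ε) :=
    hpow_int.add (hw.mono_set hIoi).norm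
  have hu'int : IntegrableOn u' (Ioi ε) := hbound_int.mono' (hu'meas.mono_set hIoi) hu'_le
  have hu0 : Tendsto u atTop (𝓝 0) := by
    refine squeeze_zero_norm' ?_ ((tendsto_rpow_neg_atTop ha).const_mul A |>.trans (by simp))
    filter_upwards [eventually_gt_atTop 0] with t ht using hub t ht
  refine (norm_integral_Ioi_cexp_mul_le hs (fun t ht => hderiv t (hε.trans_le ht)) hu0
    (hu.mono_set hIoi) hu'int).trans ?_
  rw [add_assoc]
  gcongr
  · exact hub ε hε
  refine (integral_mono_of_nonneg (ae_of_all _ fun t => norm_nonneg _) hbound_int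
    hu'_le).trans ?_
  rw [integral_add hpow_int (hw.mono_set hIoi).norm, integral_const_mul,
    integral_Ioi_rpow_of_lt (by linarith) hε, show -a - 1 + 1 = -a by ring, neg_div_neg_eq]
  exact add_le_add le_rfl (setIntegral_mono_set (Integrable.norm hw)
    (ae_of_all _ fun t => norm_nonneg _) hIoi.eventuallyLE)

theorem isBigO_fourierIoi_of_norm_le_rpow {w : ℝ → ℂ} {a A A' : ℝ} (ha₀ : 0 < a) (ha₁ : a < 1)
    (hderiv : ∀ t ∈ Ioi 0, HasDerivAt u (u' t) t) (hu : IntegrableOn u (Ioi 0))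
    (hub : ∀ t ∈ Ioi 0, ‖u t‖ ≤ A * t ^ (-a))
    (hu'b : ∀ t ∈ Ioi 0, ‖u' t‖ ≤ A' * t ^ (-a - 1) + ‖w t‖) (hw : IntegrableOn w (Ioi 0)) :
    fourierIoi u =O[atTop] fun s => s ^ (a - 1) := by
  set W := ∫ t in Ioi 0, ‖w t‖
  have hW : 0 ≤ W := setIntegral_nonneg measurableSet_Ioi fun t _ => norm_nonneg _
  refine IsBigO.of_bound (A / (1 - a) + A + A' / a + W) ?_
  filter_upwards [eventually_ge_atTop 1] with s hs
  have hs₀ : 0 < s := by linarith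
  -- Split at `ε = s⁻¹`: near `0` use the integrability of `t ^ (-a)`, beyond `ε` integrate
  -- by parts.
  set ε := s⁻¹
  have hε : 0 < ε := inv_pos.mpr hs₀
  have hsplit : fourierIoi u s = (∫ t in Ioc 0 ε, cexp (-I * t * s) * u t) +
      ∫ t in Ioi ε, cexp (-I * t * s) * u t := by
    rw [fourierIoi, ← Ioc_union_Ioi_eq_Ioi hε.le, setIntegral_union (Ioc_disjoint_Ioi le_rfl)
      measurableSet_Ioi ((hu.mono_set Ioc_subset_Ioi_self).cexp_neg_I_mul_mul s)
      ((hu.mono_set (Ioi_subset_Ioi hε.le)).cexp_neg_I_mul_mul s)]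
  have hnear : ‖∫ t in Ioc 0 ε, cexp (-I * t * s) * u t‖ ≤ A * ε ^ (1 - a) / (1 - a) :=
    norm_setIntegral_Ioc_le_of_norm_le_rpow ha₁ hε.le fun t ht => by
      rw [norm_mul, norm_cexp_neg_I_mul_mul, one_mul]; exact hub t ht.1
  have htail := norm_integral_Ioi_cexp_mul_le_of_rpow ha₀ hε hs₀ hderiv hu hub hu'b hw
  have hε_pow : ε ^ (1 - a) = s ^ (a - 1) := by
    rw [Real.inv_rpow hs₀.le, ← Real.rpow_neg hs₀.le, neg_sub]
  have hε_pow' : ε ^ (-a) / s = s ^ (a - 1) := by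
    rw [Real.inv_rpow hs₀.le, ← Real.rpow_neg hs₀.le, neg_neg, Real.rpow_sub_one hs₀.ne']
  have hs_inv : s⁻¹ ≤ s ^ (a - 1) := by
    rw [← Real.rpow_neg_one]; exact Real.rpow_le_rpow_of_exponent_le hs (by linarith)
  rw [Real.norm_eq_abs, abs_of_pos (Real.rpow_pos_of_pos hs₀ _), hsplit]
  calc _ ≤ A * ε ^ (1 - a) / (1 - a) + (A * ε ^ (-a) + A' * (ε ^ (-a) / a) + W) / s :=
        (norm_add_le _ _).trans (add_le_add hnear htail)
    _ = A / (1 - a) * ε ^ (1 - a) + (A + A' / a) * (ε ^ (-a) / s) + W * s⁻¹ := by ring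
    _ ≤ _ := by rw [hε_pow, hε_pow']; nlinarith

theorem tendsto_fourierIoi_atTop (u : ℝ → ℂ) : Tendsto (fourierIoi u) atTop (𝓝 0) := by
  have hscale : Tendsto (fun s : ℝ => s / (2 * Real.pi)) atTop (cocompact ℝ) :=
    (tendsto_id.atTop_div_const (by positivity)).mono_right
      (cocompact_eq_atBot_atTop (α := ℝ) ▸ le_sup_right)
  refine ((Real.tendsto_integral_exp_smul_cocompact ((Ioi 0).indicator u)).comp hscale).congr
    fun s => ?_
  rw [Function.comp_apply, fourierIoi, ← integral_indicator measurableSet_Ioi]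
  congr 1
  funext t
  rw [indicator_mul_right, Circle.smul_def, Real.fourierChar_apply, smul_eq_mul]
  congr 2
  push_cast
  field_simp

theorem hasDerivAt_fourierIoi (hu : IntegrableOn u (Ioi 0))
    (hu₁ : IntegrableOn (fun t : ℝ => (t : ℂ) * u t) (Ioi 0)) (s : ℝ) :
    HasDerivAt (fourierIoi u) (fourierIoi (fun t : ℝ => -I * t * u t) s) s := by
  have hu₁' : IntegrableOn (fun t : ℝ => -I * t * u t) (Ioi 0) :=
    IntegrableOn.congr_fun (hu₁.const_mul (-I)) (fun t _ => (mul_assoc _ _ _).symm)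
      measurableSet_Ioi
  refine (hasDerivAt_integral_of_dominated_loc_of_deriv_le (μ := volume.restrict (Ioi 0))
    (F := fun s t : ℝ => cexp (-I * t * s) * u t)
    (F' := fun s t : ℝ => cexp (-I * t * s) * (-I * t * u t))
    (bound := fun t : ℝ => ‖(t : ℂ) * u t‖) univ_mem
    (Eventually.of_forall fun s => (hu.cexp_neg_I_mul_mul s).aestronglyMeasurable)
    (hu.cexp_neg_I_mul_mul s) (hu₁'.cexp_neg_I_mul_mul s).aestronglyMeasurable
    (ae_of_all _ fun t x _ => ?_) hu₁.norm
    (ae_of_all _ fun t x _ => ?_)).2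
  · rw [norm_mul, norm_cexp_neg_I_mul_mul, one_mul, mul_assoc, norm_mul, norm_neg, norm_I, one_mul]
  · exact ((hasDerivAt_cexp_neg_I_mul_mul_right t x).mul_const (u t)).congr_deriv (by ring)

end HalfLineFourier

noncomputable def powExp (α : ℝ) (ξ : ℂ) (c t : ℝ) : ℂ :=
  ((t ^ c : ℝ) : ℂ) * cexp (-(((t ^ α : ℝ) : ℂ) * ξ))

noncomputable def powExpDeriv (α : ℝ) (ξ : ℂ) (c t : ℝ) : ℂ :=
  c * powExp α ξ (c - 1) t - α * ξ * powExp α ξ (c + α - 1) t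

section PowExp

variable {α c t : ℝ} {ξ : ℂ}

lemma norm_powExp (ht : 0 ≤ t) : ‖powExp α ξ c t‖ = t ^ c * Real.exp (-ξ.re * t ^ α) := by
  rw [powExp, norm_mul, norm_exp, norm_real, Real.norm_of_nonneg (Real.rpow_nonneg ht c)]
  simp [mul_comm]

lemma norm_powExp_le (hξ : 0 ≤ ξ.re) (ht : 0 ≤ t) : ‖powExp α ξ c t‖ ≤ t ^ c := by
  rw [norm_powExp ht]
  refine mul_le_of_le_one_right (Real.rpow_nonneg ht c) (Real.exp_le_one_iff.mpr ?_)
  nlinarith [Real.rpow_nonneg ht α]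

lemma norm_powExp_add_le (hξ : 0 < ξ.re) (ht : 0 < t) :
    ‖powExp α ξ (c + α) t‖ ≤ t ^ c / ξ.re := by
  have hy : ξ.re * t ^ α * Real.exp (-(ξ.re * t ^ α)) ≤ 1 := by
    set y := ξ.re * t ^ α
    have := Real.add_one_le_exp y
    have := Real.exp_pos (-y)
    calc y * Real.exp (-y) ≤ Real.exp y * Real.exp (-y) := by nlinarith
      _ = 1 := by rw [← Real.exp_add, add_neg_cancel, Real.exp_zero]
  rw [norm_powExp ht.le, Real.rpow_add ht, le_div_iff₀ hξ]
  have htc := Real.rpow_pos_of_pos ht c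
  calc t ^ c * t ^ α * Real.exp (-ξ.re * t ^ α) * ξ.re
      = t ^ c * (ξ.re * t ^ α * Real.exp (-(ξ.re * t ^ α))) := by ring_nf
    _ ≤ t ^ c := mul_le_of_le_one_right htc.le hy

lemma hasDerivAt_powExp (ht : 0 < t) :
    HasDerivAt (powExp α ξ c) (powExpDeriv α ξ c t) t := by
  have hpow (p : ℝ) : HasDerivAt (fun t : ℝ => ((t ^ p : ℝ) : ℂ)) ((p * t ^ (p - 1) : ℝ) : ℂ) t :=
    (Real.hasDerivAt_rpow_const (Or.inl ht.ne')).ofReal_comp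
  refine ((hpow c).mul (((hpow α).mul_const ξ).neg.cexp)).congr_deriv ?_
  rw [powExpDeriv, powExp, powExp, show c + α - 1 = c + (α - 1) by ring, Real.rpow_add ht]
  simp only [Pi.neg_apply]
  push_cast
  ring

lemma hasDerivAt_powExpDeriv (ht : 0 < t) :
    HasDerivAt (powExpDeriv α ξ c)
      (c * powExpDeriv α ξ (c - 1) t - α * ξ * powExpDeriv α ξ (c + α - 1) t) t :=
  ((hasDerivAt_powExp ht).const_mul _).sub ((hasDerivAt_powExp ht).const_mul _)

lemma continuous_powExp (hα : 0 ≤ α) (hc : 0 ≤ c) : Continuous (powExp α ξ c) := by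
  unfold powExp
  have := Real.continuous_rpow_const hα
  have := Real.continuous_rpow_const hc
  fun_prop

lemma continuousOn_powExp : ContinuousOn (powExp α ξ c) (Ioi 0) := fun _ ht =>
  (hasDerivAt_powExp ht).continuousAt.continuousWithinAt

lemma ofReal_mul_powExp (ht : 0 < t) : (t : ℂ) * powExp α ξ c t = powExp α ξ (c + 1) t := by
  rw [powExp, powExp, Real.rpow_add_one ht.ne']
  push_cast
  ring

lemma cexp_neg_I_mul_mul_mul_powExp (α c : ℝ) (ξ : ℂ) (t s : ℝ) :
    cexp (-I * t * s) * powExp α ξ c t =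
      ((t ^ c : ℝ) : ℂ) * cexp (-I * t * s - ((t ^ α : ℝ) : ℂ) * ξ) := by
  rw [powExp, sub_eq_add_neg, exp_add]
  ring

lemma integrableOn_powExp (hα : 0 < α) (hξ : 0 < ξ.re) (hc : -1 < c) :
    IntegrableOn (powExp α ξ c) (Ioi 0) :=
  (integrableOn_rpow_mul_exp_neg_mul_rpow hc hα hξ).mono'
    (continuousOn_powExp.aestronglyMeasurable measurableSet_Ioi)
    ((ae_restrict_mem measurableSet_Ioi).mono fun _ ht => (norm_powExp (le_of_lt ht)).le)

lemma integrableOn_powExpDeriv (hα : 0 < α) (hξ : 0 < ξ.re) (hc : 0 < c) :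
    IntegrableOn (powExpDeriv α ξ c) (Ioi 0) :=
  ((integrableOn_powExp hα hξ (by linarith)).const_mul _).sub
    ((integrableOn_powExp hα hξ (by linarith)).const_mul _)

lemma tendsto_powExp_atTop (hξ : 0 < ξ.re) (hc : c < α) :
    Tendsto (powExp α ξ c) atTop (𝓝 0) := by
  have h := (tendsto_rpow_neg_atTop (y := α - c) (by linarith)).div_const ξ.re
  rw [zero_div] at h
  refine squeeze_zero_norm' ?_ h
  filter_upwards [eventually_gt_atTop 0] with t ht
  simpa using norm_powExp_add_le (c := c - α) (α := α) hξ ht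

lemma norm_powExpDeriv_le (hξ : 0 < ξ.re) (ht : 0 < t) :
    ‖powExpDeriv α ξ c t‖ ≤ (|c| + |α| * ‖ξ‖ / ξ.re) * t ^ (c - 1) := by
  have h₁ := norm_powExp_le (α := α) (c := c - 1) hξ.le ht.le
  have h₂ := norm_powExp_add_le (α := α) (c := c - 1) hξ ht
  rw [show c - 1 + α = c + α - 1 by ring] at h₂
  rw [powExpDeriv]
  refine (norm_sub_le _ _).trans ?_
  rw [norm_mul, norm_mul, norm_mul, norm_real, norm_real, Real.norm_eq_abs, Real.norm_eq_abs]
  have := Real.rpow_nonneg ht.le (c - 1)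
  calc |c| * ‖powExp α ξ (c - 1) t‖ + |α| * ‖ξ‖ * ‖powExp α ξ (c + α - 1) t‖
      ≤ |c| * t ^ (c - 1) + |α| * ‖ξ‖ * (t ^ (c - 1) / ξ.re) := by gcongr
    _ = _ := by ring

lemma fourierIoi_powExp_zero (hα : 0 < α) (hξ : 0 < ξ.re) {s : ℝ} (hs : s ≠ 0) :
    fourierIoi (powExp α ξ 0) s = (1 - α * ξ * fourierIoi (powExp α ξ (α - 1)) s) / (I * s) := by
  have hderiv (t : ℝ) (ht : t ∈ Ioi 0) :
      HasDerivAt (powExp α ξ 0) (-(α * ξ) * powExp α ξ (α - 1) t) t :=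
    (hasDerivAt_powExp ht).congr_deriv (by simp [powExpDeriv])
  rw [fourierIoi, integral_Ioi_cexp_mul_eq hs hderiv
    (continuous_powExp hα.le le_rfl).continuousWithinAt (tendsto_powExp_atTop hξ hα)
    (integrableOn_powExp hα hξ (by norm_num))
    ((integrableOn_powExp hα hξ (by linarith)).const_mul _)]
  simp_rw [mul_left_comm _ (-((α : ℂ) * ξ))]
  rw [integral_const_mul, fourierIoi]
  simp [powExp, Real.zero_rpow hα.ne']
  ring

lemma fourierIoi_powExp_sub_one (hα : 1 < α) (hξ : 0 < ξ.re) {s : ℝ} (hs : s ≠ 0) :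
    fourierIoi (powExp α ξ (α - 1)) s = fourierIoi (powExpDeriv α ξ (α - 1)) s / (I * s) := by
  rw [fourierIoi, integral_Ioi_cexp_mul_eq hs (fun t ht => hasDerivAt_powExp ht)
    (continuous_powExp (by linarith) (by linarith)).continuousWithinAt
    (tendsto_powExp_atTop hξ (by linarith)) (integrableOn_powExp (by linarith) hξ (by linarith))
    (integrableOn_powExpDeriv (by linarith) hξ (by linarith))]
  simp [powExp, Real.zero_rpow (show α - 1 ≠ 0 by linarith), fourierIoi]

lemma isBigO_fourierIoi_powExpDeriv (hα₁ : 1 < α) (hα₂ : α < 2) (hξ : 0 < ξ.re) :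
    fourierIoi (powExpDeriv α ξ (α - 1)) =O[atTop] fun s => s ^ (1 - α) := by
  -- Near `0` this is `(α - 1) t ^ (α - 2)` plus a smoother term; only the derivative of the
  -- leading term fails to be integrable.
  have hexp : -(2 - α) = α - 1 - 1 := by ring
  have h := isBigO_fourierIoi_of_norm_le_rpow (a := 2 - α)
    (u' := fun t => ((α - 1 : ℝ) : ℂ) * powExpDeriv α ξ (α - 1 - 1) t -
      α * ξ * powExpDeriv α ξ (α - 1 + α - 1) t)
    (w := fun t => α * ξ * powExpDeriv α ξ (α - 1 + α - 1) t)
    (A := |α - 1| + |α| * ‖ξ‖ / ξ.re) (A' := |α - 1| * (|α - 1 - 1| + |α| * ‖ξ‖ / ξ.re))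
    (by linarith) (by linarith) (fun t ht => hasDerivAt_powExpDeriv ht)
    (integrableOn_powExpDeriv (by linarith) hξ (by linarith))
    (fun t ht => hexp ▸ norm_powExpDeriv_le hξ ht)
    (fun t ht => by
      refine (norm_sub_le _ _).trans (add_le_add ?_ le_rfl)
      rw [norm_mul, norm_real, Real.norm_eq_abs, mul_assoc,
        show -(2 - α) - 1 = α - 1 - 1 - 1 by ring]
      exact mul_le_mul_of_nonneg_left (norm_powExpDeriv_le hξ ht) (abs_nonneg _))
    ((integrableOn_powExpDeriv (by linarith) hξ (by linarith)).const_mul _)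
  rwa [show 2 - α - 1 = 1 - α by ring] at h

lemma isBigO_fourierIoi_powExp_sub_one (hα₁ : 1 < α) (hα₂ : α < 2) (hξ : 0 < ξ.re) :
    fourierIoi (powExp α ξ (α - 1)) =O[atTop] fun s => s ^ (-α) := by
  have hinv : (fun s : ℝ => (I * s)⁻¹) =O[atTop] fun s => s⁻¹ :=
    IsBigO.of_bound 1 (Eventually.of_forall fun s => by simp)
  refine ((isBigO_fourierIoi_powExpDeriv hα₁ hα₂ hξ).mul hinv).congr' ?_ ?_
  · filter_upwards [eventually_ne_atTop 0] with s hs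
    rw [fourierIoi_powExp_sub_one hα₁ hξ hs, div_eq_mul_inv]
  · filter_upwards [eventually_gt_atTop 0] with s hs
    rw [← div_eq_mul_inv, ← Real.rpow_sub_one hs.ne']
    congr 1
    ring

lemma hasDerivAt_fourierIoi_powExp (hα : 0 < α) (hξ : 0 < ξ.re) (hc : -1 < c) (s : ℝ) :
    HasDerivAt (fourierIoi (powExp α ξ c)) (-I * fourierIoi (powExp α ξ (c + 1)) s) s := by
  have hmul : EqOn (fun t : ℝ => (t : ℂ) * powExp α ξ c t) (powExp α ξ (c + 1)) (Ioi 0) :=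
    fun t ht => ofReal_mul_powExp ht
  refine (hasDerivAt_fourierIoi (integrableOn_powExp hα hξ hc)
    ((integrableOn_powExp hα hξ (by linarith)).congr_fun hmul.symm measurableSet_Ioi)
    s).congr_deriv ?_
  rw [fourierIoi, fourierIoi, ← integral_const_mul]
  refine setIntegral_congr_fun measurableSet_Ioi fun t ht => ?_
  rw [← hmul ht]
  ring

lemma integrableOn_fourierIoi_powExp_sub_one (hα₁ : 1 < α) (hα₂ : α < 2) (hξ : 0 < ξ.re)
    (a : ℝ) : IntegrableOn (fourierIoi (powExp α ξ (α - 1))) (Ioi a) := by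
  have hJ : Continuous (fourierIoi (powExp α ξ (α - 1))) := continuous_iff_continuousAt.mpr
    fun s => (hasDerivAt_fourierIoi_powExp (by linarith) hξ (by linarith) s).continuousAt
  exact ((hJ.locallyIntegrable.locallyIntegrableOn _).integrableOn_of_isBigO_atTop
    (isBigO_fourierIoi_powExp_sub_one hα₁ hα₂ hξ)
    (integrableAtFilter_rpow_atTop_iff.mpr (by linarith))).mono_set Ioi_subset_Ici_self

lemma integral_Ioi_fourierIoi_powExp_sub_one (hα₁ : 1 < α) (hα₂ : α < 2) (hξ : 0 < ξ.re)
    (a : ℝ) :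
    ∫ s in Ioi a, fourierIoi (powExp α ξ (α - 1)) s = -I * fourierIoi (powExp α ξ (α - 2)) a := by
  have hK (s : ℝ) : HasDerivAt (fun s => I * fourierIoi (powExp α ξ (α - 2)) s)
      (fourierIoi (powExp α ξ (α - 1)) s) s := by
    have h := (hasDerivAt_fourierIoi_powExp (α := α) (c := α - 2) (by linarith) hξ (by linarith)
      s).const_mul I
    rw [show α - 2 + 1 = α - 1 by ring, ← mul_assoc, mul_neg, I_mul_I, neg_neg, one_mul] at h
    exact h
  have hK_lim : Tendsto (fun s => I * fourierIoi (powExp α ξ (α - 2)) s) atTop (𝓝 0) := by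
    simpa using (tendsto_fourierIoi_atTop _).const_mul I
  rw [integral_Ioi_of_hasDerivAt_of_tendsto (hK a).continuousAt.continuousWithinAt
    (fun s _ => hK s) (integrableOn_fourierIoi_powExp_sub_one hα₁ hα₂ hξ a) hK_lim,
    zero_sub, ← neg_mul]

lemma mul_re_fourierIoi_powExp_zero (hα : 0 < α) (hξ : 0 < ξ.re) {s : ℝ} (hs : s ≠ 0) :
    s * (fourierIoi (powExp α ξ 0) s).re = α * (I * ξ * fourierIoi (powExp α ξ (α - 1)) s).re := by
  have hs' : (s : ℂ) ≠ 0 := ofReal_ne_zero.mpr hs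
  have h : (s : ℂ) * fourierIoi (powExp α ξ 0) s =
      -I + α * (I * ξ * fourierIoi (powExp α ξ (α - 1)) s) := by
    rw [fourierIoi_powExp_zero hα hξ hs]
    field_simp
    ring_nf
    rw [I_sq]
    ring
  rw [← re_ofReal_mul, h, add_re, neg_re, I_re, neg_zero, zero_add, re_ofReal_mul]

theorem integral_Ioi_mul_re_fourierIoi_powExp_zero (hα₁ : 1 < α) (hα₂ : α < 2)
    (hξ : 0 < ξ.re) (a : ℝ) :
    ∫ s in Ioi a, s * (fourierIoi (powExp α ξ 0) s).re =
      α * (ξ * fourierIoi (powExp α ξ (α - 2)) a).re := by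
  have hre : ∫ s in Ioi a, (I * ξ * fourierIoi (powExp α ξ (α - 1)) s).re =
      (∫ s in Ioi a, I * ξ * fourierIoi (powExp α ξ (α - 1)) s).re :=
    integral_re ((integrableOn_fourierIoi_powExp_sub_one hα₁ hα₂ hξ a).const_mul (I * ξ))
  rw [setIntegral_congr_ae measurableSet_Ioi (((countable_singleton 0).ae_notMem _).mono
      fun s hs _ => mul_re_fourierIoi_powExp_zero (by linarith) hξ hs),
    integral_const_mul, hre, integral_const_mul,
    integral_Ioi_fourierIoi_powExp_sub_one hα₁ hα₂ hξ]
  congr 2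
  ring_nf
  rw [I_sq]
  ring

end PowExp

theorem stable_tce_integral_form_general
    (α β σ : ℝ) (hα : α ∈ Set.Ioo (1 : ℝ) 2) (hσ : 0 < σ)
    (ξ : ℂ) (hξ : ξ = ((σ ^ α : ℝ) : ℂ) * (1 - Complex.I * β * Real.tan (Real.pi * α / 2)))
    (f : ℝ → ℝ)
    (hf : ∀ s : ℝ, f s = (1 / Real.pi) *
      (∫ t in Set.Ioi (0 : ℝ), Complex.exp (-Complex.I * t * s -
        ((t ^ α : ℝ) : ℂ) * ξ)).re) :
    ∀ sq : ℝ, 0 < sq →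
      (∫ s in Set.Ioi sq, s * f s) =
        (α / Real.pi) * (ξ * ∫ t in Set.Ioi (0 : ℝ),
          ((t ^ (α - 2) : ℝ) : ℂ) *
            Complex.exp (-Complex.I * sq * t - ((t ^ α : ℝ) : ℂ) * ξ)).re ∧
      ∀ q ∈ Set.Ioo (0 : ℝ) 1,
        (1 / (1 - q)) * (∫ s in Set.Ioi sq, s * f s) =
          (α / (Real.pi * (1 - q))) * (ξ * ∫ t in Set.Ioi (0 : ℝ),
            ((t ^ (α - 2) : ℝ) : ℂ) *
              Complex.exp (-Complex.I * sq * t - ((t ^ α : ℝ) : ℂ) * ξ)).re := by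
  intro sq _
  obtain ⟨hα₁, hα₂⟩ := hα
  have hξ₀ : 0 < ξ.re := by
    rw [hξ, re_ofReal_mul]
    simp only [sub_re, one_re, mul_re, I_re, I_im, ofReal_re, ofReal_im]
    simpa using Real.rpow_pos_of_pos hσ α
  have hdensity (s : ℝ) : f s = (fourierIoi (powExp α ξ 0) s).re / Real.pi := by
    rw [hf, fourierIoi, one_div_mul_eq_div]
    congr 2
    refine setIntegral_congr_fun measurableSet_Ioi fun t _ => ?_
    rw [cexp_neg_I_mul_mul_mul_powExp, Real.rpow_zero, ofReal_one, one_mul]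
  have hK : (∫ t in Ioi (0 : ℝ), ((t ^ (α - 2) : ℝ) : ℂ) *
      cexp (-I * sq * t - ((t ^ α : ℝ) : ℂ) * ξ)) = fourierIoi (powExp α ξ (α - 2)) sq :=
    setIntegral_congr_fun measurableSet_Ioi fun t _ => by
      rw [cexp_neg_I_mul_mul_mul_powExp, mul_right_comm _ (sq : ℂ)]
  have hmoment : ∫ s in Ioi sq, s * f s =
      α / Real.pi * (ξ * fourierIoi (powExp α ξ (α - 2)) sq).re := by
    simp_rw [hdensity, mul_div_assoc']
    rw [integral_div, integral_Ioi_mul_re_fourierIoi_powExp_zero hα₁ hα₂ hξ₀]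
    ring
  rw [hK, hmoment]
  refine ⟨rfl, fun q _ => ?_⟩
  rw [mul_comm Real.pi, ← div_div]
  ring

/-- **Theorem 5.3 (integral form).** For the stable density `f` of `S_α(σ, β, 0)` with
`α ∈ (1,2)`, `ξ = σ^α (1 - iβ tan(πα/2))`, the tail partial first moment satisfies
`∫_{s_q}^∞ s f(s) ds = (α/π) Re[ξ ∫₀^∞ t^{α-2} exp(-i s_q t - t^α ξ) dt]`; dividing by `1 - q`
gives the Tail Conditional Expectation at prudence level `q`. -/
theorem stable_tce_integral_form
    (α β σ : ℝ) (hα : α ∈ Set.Ioo (1 : ℝ) 2) (hβ : β ∈ Set.Icc (-1 : ℝ) 1) (hσ : 0 < σ)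
    (ξ : ℂ) (hξ : ξ = ((σ ^ α : ℝ) : ℂ) * (1 - Complex.I * β * Real.tan (Real.pi * α / 2)))
    (f : ℝ → ℝ)
    (hf : ∀ s : ℝ, f s = (1 / Real.pi) *
      (∫ t in Set.Ioi (0 : ℝ), Complex.exp (-Complex.I * t * s -
        ((t ^ α : ℝ) : ℂ) * ξ)).re) :
    ∀ sq : ℝ, 0 < sq →
      (∫ s in Set.Ioi sq, s * f s) =
        (α / Real.pi) * (ξ * ∫ t in Set.Ioi (0 : ℝ),
          ((t ^ (α - 2) : ℝ) : ℂ) *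
            Complex.exp (-Complex.I * sq * t - ((t ^ α : ℝ) : ℂ) * ξ)).re ∧
      ∀ q ∈ Set.Ioo (0 : ℝ) 1,
        (1 / (1 - q)) * (∫ s in Set.Ioi sq, s * f s) =
          (α / (Real.pi * (1 - q))) * (ξ * ∫ t in Set.Ioi (0 : ℝ),
            ((t ^ (α - 2) : ℝ) : ℂ) *
              Complex.exp (-Complex.I * sq * t - ((t ^ α : ℝ) : ℂ) * ξ)).re :=
  stable_tce_integral_form_general α β σ hα hσ ξ hξ f hf
end
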